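/- arXiv:2008.13070 — 3 statements merged into one kernel-verified Lean document; each statement's English description precedes it below -/
import Mathlib

section
/- Let n and k satisfy 4 ≤ k ≤ n, and let λ = (3n−k−1, k, 1) and μ = (3n−k−5, k−4, 0). Then f_λ = f_μ. -/
/-- The recursive function `g` from the paper. -/
def g (i ω : ℕ) : ℕ :=
  if _ : 6 ≤ i then g (i - 6) ω + 1
  else if ω = 0 then (if i = 0 ∨ i = 2 then 0 else 1)
  else if i = 4 ∧ ω = 1 then 1 else 0
termination_by i
decreasing_by omega

/-- Thrall's multiplicity `f` for a partition `(l1, l2, l3)` (natural subtraction). -/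
def thrallF (l1 l2 l3 : ℕ) : ℕ :=
  g (min (1 + l1 - l2) (1 + l2 - l3)) (l2 % 2)

lemma g_step (i ω : ℕ) : g (i + 6) ω = g i ω + 1 := by
  rw [g]
  simp

lemma g_key : ∀ k, 4 ≤ k → g k (k % 2) = g (k - 3) (k % 2) := by
  intro k
  induction k using Nat.strong_induction_on with
  | _ k ih =>
    intro hk
    obtain ⟨ω, hω⟩ : ∃ ω, k % 2 = ω := ⟨_, rfl⟩
    rw [hω]
    by_cases h10 : k < 10
    · interval_cases k <;> subst hω <;> (repeat (rw [g]; norm_num))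
    · have hih := ih (k - 6) (by omega) (by omega)
      have hωe : (k - 6) % 2 = ω := by omega
      rw [hωe, show k - 6 - 3 = k - 9 from by omega] at hih
      calc g k ω = g (k - 6 + 6) ω := by rw [show k - 6 + 6 = k from by omega]
        _ = g (k - 6) ω + 1 := g_step _ _
        _ = g (k - 9) ω + 1 := by rw [hih]
        _ = g (k - 9 + 6) ω := (g_step _ _).symm
        _ = g (k - 3) ω := by rw [show k - 9 + 6 = k - 3 from by omega]

theorem thrallF_hook_rec (n k : ℕ) (hk4 : 4 ≤ k) (hkn : k ≤ n) :
    thrallF (3 * n - k - 1) k 1 = thrallF (3 * n - k - 5) (k - 4) 0 := by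
  unfold thrallF
  have h1 : min (1 + (3 * n - k - 1) - k) (1 + k - 1) = k := by omega
  have h2 : min (1 + (3 * n - k - 5) - (k - 4)) (1 + (k - 4) - 0) = k - 3 := by omega
  have h3 : (k - 4) % 2 = k % 2 := by omega
  rw [h1, h2, h3]
  exact g_key k hk4
end

section
/- Let n and k satisfy n+2 ≤ k ≤ ⌊3n/2⌋, and let λ = (3n−k−1, k, 1) and μ = (3n−k−5, k−4, 0). Then f_λ = f_μ. -/
theorem thrallF_hook_large (n k : ℕ) (hk1 : n + 2 ≤ k) (hk2 : k ≤ 3 * n / 2) :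
    thrallF (3 * n - k - 1) k 1 = thrallF (3 * n - k - 5) (k - 4) 0 := by
  have h3 : 2 * k ≤ 3 * n := by omega
  unfold thrallF
  have e1 : min (1 + (3 * n - k - 1) - k) (1 + k - 1) = 3 * n - 2 * k := by
    rw [Nat.min_def]; split <;> omega
  have e2 : min (1 + (3 * n - k - 5) - (k - 4)) (1 + (k - 4) - 0) = 3 * n - 2 * k := by
    rw [Nat.min_def]; split <;> omega
  rw [e1, e2]
  congr 1
  omega
end

section
/- For all n ≥ 2 in ℕ, the plethysm h₂[hₙ] of symmetric functions satisfies h₂[hₙ] = Σ_{k=0}^{⌊n/2⌋} s_{(2n−2k, 2k)}, where s_μ denotes the Schur function indexed by μ. -/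
/-!
Since `h₂ = (p₁² + p₂)/2`, we have `h₂[hₙ] = (hₙ² + hₙ(x²))/2`. Write `s_k = s_{(2n-k,k)}`.
By Pieri (here a telescoping sum of Jacobi–Trudi determinants) `hₙ² = ∑_{k ≤ n} s_k`.
For the generating series `H(t) = ∑ hₖ tᵏ = ∏ 1/(1 - xᵢ t)` we have
`H(t) H(-t) = ∏ 1/(1 - xᵢ² t²) = H_{x²}(t²)`, so `hₙ(x²) = ∑_{j ≤ 2n} (-1)ʲ h_{2n-j} hⱼ`;
folding this palindromic sum in half gives `hₙ(x²) = ∑_{k ≤ n} (-1)ᵏ s_k`.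
Averaging the two expansions, only the even `k` survive.
-/

open MvPolynomial

/-- The complete homogeneous symmetric polynomial `h_k` in `N` variables over `ℚ`. -/
noncomputable def hPoly (N k : ℕ) : MvPolynomial (Fin N) ℚ := hsymm (Fin N) ℚ k

/-- Plethysm by `h₂`: since `h₂ = (p₁² + p₂)/2`, for a symmetric polynomial `f`
we have `h₂[f] = (f² + f(x₁², x₂², …))/2`. -/
noncomputable def plethH2 {N : ℕ} (f : MvPolynomial (Fin N) ℚ) : MvPolynomial (Fin N) ℚ :=
  C (1 / 2 : ℚ) * (f ^ 2 + bind₁ (fun i : Fin N => (X i : MvPolynomial (Fin N) ℚ) ^ 2) f)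

/-- The Schur polynomial of the two-row partition `(a, b)` (with `a ≥ b`), via the
Jacobi–Trudi identity `s_{(a,b)} = h_a h_b - h_{a+1} h_{b-1}` (and `s_{(a,0)} = h_a`). -/
noncomputable def schurTwoRow (N a b : ℕ) : MvPolynomial (Fin N) ℚ :=
  if b = 0 then hPoly N a
  else hPoly N a * hPoly N b - hPoly N (a + 1) * hPoly N (b - 1)

open Finset

namespace PowerSeries

theorem mk_pow_mul_one_sub_C_mul_X {R : Type*} [CommRing R] (a : R) :
    mk (a ^ ·) * (1 - C a * X) = 1 := by
  simpa [rescale_mk] using congrArg (rescale a) (mk_one_mul_one_sub_eq_one R)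

theorem rescale_C {R : Type*} [CommSemiring R] (a b : R) : rescale a (C b) = C b := by
  ext n
  by_cases hn : n = 0 <;> simp [coeff_C, hn]

end PowerSeries

namespace MvPolynomial

variable (σ R : Type*) [Fintype σ] [DecidableEq σ] [CommRing R]

noncomputable def hsymmSeries : PowerSeries (MvPolynomial σ R) := PowerSeries.mk (hsymm σ R)

theorem prod_mk_X_pow_eq_hsymmSeries :
    ∏ i, PowerSeries.mk ((X i : MvPolynomial σ R) ^ ·) = hsymmSeries σ R := by
  refine PowerSeries.ext fun d => ?_
  simp only [PowerSeries.coeff_prod, hsymmSeries, PowerSeries.coeff_mk, hsymm]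
  refine sum_bij' (fun l hl => ⟨Finsupp.toMultiset l, ?_⟩)
    (fun s _ => Multiset.toFinsupp s.1)
    (fun _ _ => mem_univ _) (fun s _ => ?_) (fun _ _ => by simp)
    (fun s _ => Subtype.ext (Multiset.toFinsupp_toMultiset _)) (fun l _ => ?_)
  · simpa [Finsupp.card_toMultiset, Finsupp.sum_fintype] using hl
  · exact mem_finsuppAntidiag.mpr
      ⟨(Multiset.sum_count_eq_card fun a _ => mem_univ a).trans s.2, subset_univ _⟩
  · rw [prod_multiset_map_count, Finsupp.toFinset_toMultiset]
    simp_rw [Finsupp.count_toMultiset]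
    exact (Finsupp.prod_fintype l _ (by simp)).symm

theorem hsymmSeries_mul_prod_one_sub_C_mul_X :
    hsymmSeries σ R * ∏ i, (1 - PowerSeries.C (X i) * PowerSeries.X) = 1 := by
  rw [← prod_mk_X_pow_eq_hsymmSeries, ← prod_mul_distrib]
  exact prod_eq_one fun i _ => PowerSeries.mk_pow_mul_one_sub_C_mul_X _

theorem rescale_neg_one_hsymmSeries_mul_prod_one_add_C_mul_X :
    PowerSeries.rescale (-1) (hsymmSeries σ R) *
      ∏ i, (1 + PowerSeries.C (X i) * PowerSeries.X) = 1 := by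
  have h := congrArg PowerSeries.evalNegHom (hsymmSeries_mul_prod_one_sub_C_mul_X σ R)
  simp only [map_mul, map_one, map_prod, map_sub, PowerSeries.evalNegHom_X] at h
  simpa only [PowerSeries.evalNegHom, PowerSeries.rescale_C, mul_neg, sub_neg_eq_add] using h

theorem expand_map_expand_hsymmSeries_mul_prod :
    PowerSeries.expand 2 two_ne_zero
        (PowerSeries.map (expand 2 : MvPolynomial σ R →ₐ[R] _).toRingHom (hsymmSeries σ R)) *
      ∏ i, (1 - PowerSeries.C (X i ^ 2) * PowerSeries.X ^ 2) = 1 := by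
  have h := congrArg
    (fun f => PowerSeries.expand 2 two_ne_zero
      (PowerSeries.map (expand 2 : MvPolynomial σ R →ₐ[R] _).toRingHom f))
    (hsymmSeries_mul_prod_one_sub_C_mul_X σ R)
  simpa only [map_mul, map_one, map_prod, map_sub, PowerSeries.map_C, PowerSeries.map_X,
    PowerSeries.expand_C, PowerSeries.expand_X, AlgHom.toRingHom_eq_coe, RingHom.coe_coe,
    expand_X] using h

theorem hsymmSeries_mul_rescale_neg_one :
    hsymmSeries σ R * PowerSeries.rescale (-1) (hsymmSeries σ R) =
      PowerSeries.expand 2 two_ne_zero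
        (PowerSeries.map (expand 2 : MvPolynomial σ R →ₐ[R] _).toRingHom (hsymmSeries σ R)) := by
  have hfactor : (∏ i, (1 - PowerSeries.C (X i : MvPolynomial σ R) * PowerSeries.X)) *
      ∏ i, (1 + PowerSeries.C (X i) * PowerSeries.X) =
      ∏ i, (1 - PowerSeries.C (X i ^ 2) * PowerSeries.X ^ 2) := by
    rw [← prod_mul_distrib]
    refine prod_congr rfl fun i _ => ?_
    rw [map_pow]
    ring
  refine left_inv_eq_right_inv ?_
    ((mul_comm _ _).trans (expand_map_expand_hsymmSeries_mul_prod σ R))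
  rw [← hfactor, mul_mul_mul_comm, hsymmSeries_mul_prod_one_sub_C_mul_X,
    rescale_neg_one_hsymmSeries_mul_prod_one_add_C_mul_X, one_mul]

theorem expand_two_hsymm (n : ℕ) :
    expand 2 (hsymm σ R n) =
      ∑ k ∈ range (2 * n + 1), (-1) ^ k * (hsymm σ R (2 * n - k) * hsymm σ R k) := by
  have h := congrArg (PowerSeries.coeff (2 * n)) (hsymmSeries_mul_rescale_neg_one σ R)
  simp only [PowerSeries.coeff_mul, hsymmSeries, PowerSeries.coeff_rescale, PowerSeries.coeff_mk,
    PowerSeries.coeff_expand_mul, PowerSeries.coeff_map] at h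
  refine h.symm.trans ?_
  rw [← Nat.sum_antidiagonal_swap]
  simp only [Prod.fst_swap, Prod.snd_swap]
  rw [Nat.sum_antidiagonal_eq_sum_range_succ (fun i j => hsymm σ R j * ((-1) ^ i * hsymm σ R i))]
  exact sum_congr rfl fun k _ => mul_left_comm _ _ _

end MvPolynomial

namespace Finset

theorem sum_range_of_palindrome {M : Type*} [AddCommMonoid M] (f : ℕ → M) (n : ℕ)
    (hf : ∀ k ≤ 2 * n, f (2 * n - k) = f k) :
    ∑ k ∈ range (2 * n + 1), f k = ∑ k ∈ range (n + 1), f k + ∑ k ∈ range n, f k := by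
  rw [show 2 * n + 1 = (n + 1) + n by omega, sum_range_add, ← sum_range_reflect f n]
  refine congrArg _ (sum_congr rfl fun k hk => ?_)
  rw [mem_range] at hk
  rw [← hf (n + 1 + k) (by omega)]
  congr 1
  omega

theorem sum_range_succ_one_add_neg_one_pow_mul {M : Type*} [CommRing M] (f : ℕ → M) (n : ℕ) :
    ∑ k ∈ range (n + 1), (1 + (-1) ^ k) * f k = 2 * ∑ k ∈ range (n / 2 + 1), f (2 * k) := by
  induction n with
  | zero => norm_num [two_mul]
  | succ n ih =>
    rw [sum_range_succ, ih]
    rcases Nat.even_or_odd (n + 1) with ⟨m, hm⟩ | hodd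
    · rw [show (n + 1) / 2 = n / 2 + 1 by omega, sum_range_succ _ (n / 2 + 1),
        show 2 * (n / 2 + 1) = n + 1 by omega, Even.neg_one_pow ⟨m, hm⟩]
      ring
    · rw [Odd.neg_one_pow hodd, show (n + 1) / 2 = n / 2 by obtain ⟨m, hm⟩ := hodd; omega]
      ring

end Finset

theorem hPoly_zero (N : ℕ) : hPoly N 0 = 1 := hsymm_zero _ _

theorem schurTwoRow_zero (N a : ℕ) : schurTwoRow N a 0 = hPoly N a := if_pos rfl

theorem schurTwoRow_succ (N a b : ℕ) :
    schurTwoRow N a (b + 1) = hPoly N a * hPoly N (b + 1) - hPoly N (a + 1) * hPoly N b :=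
  if_neg b.succ_ne_zero

theorem schurTwoRow_two_mul_sub_succ (N n k : ℕ) (hk : k < 2 * n) :
    schurTwoRow N (2 * n - (k + 1)) (k + 1) =
      hPoly N (2 * n - (k + 1)) * hPoly N (k + 1) - hPoly N (2 * n - k) * hPoly N k := by
  rw [schurTwoRow_succ, show 2 * n - (k + 1) + 1 = 2 * n - k by omega]

theorem hPoly_sq_eq_sum_schurTwoRow (N n : ℕ) :
    hPoly N n ^ 2 = ∑ k ∈ range (n + 1), schurTwoRow N (2 * n - k) k := by
  rw [sum_range_succ', sum_congr rfl fun k hk =>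
      schurTwoRow_two_mul_sub_succ N n k (by rw [mem_range] at hk; omega),
    sum_range_sub (fun k => hPoly N (2 * n - k) * hPoly N k), schurTwoRow_zero, hPoly_zero,
    show 2 * n - n = n by omega]
  ring

theorem expand_two_hPoly_eq_sum_schurTwoRow (N n : ℕ) :
    expand 2 (hPoly N n) = ∑ k ∈ range (n + 1), (-1) ^ k * schurTwoRow N (2 * n - k) k := by
  set f : ℕ → MvPolynomial (Fin N) ℚ := fun k => (-1) ^ k * (hPoly N (2 * n - k) * hPoly N k)
  have hf : ∀ k ≤ 2 * n, f (2 * n - k) = f k := by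
    intro k hk
    simp only [f, show 2 * n - (2 * n - k) = k by omega, mul_comm (hPoly N k)]
    rw [neg_one_pow_eq_pow_mod_two, show (2 * n - k) % 2 = k % 2 by omega,
      ← neg_one_pow_eq_pow_mod_two]
  have h1 : expand 2 (hPoly N n) = ∑ k ∈ range (2 * n + 1), f k := expand_two_hsymm (Fin N) ℚ n
  rw [h1, sum_range_of_palindrome f n hf]
  calc ∑ k ∈ range (n + 1), f k + ∑ k ∈ range n, f k
      = ∑ k ∈ range n, (f (k + 1) + f k) + f 0 := by
        rw [sum_range_succ', sum_add_distrib]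
        abel
    _ = ∑ k ∈ range n, (-1) ^ (k + 1) * schurTwoRow N (2 * n - (k + 1)) (k + 1) +
          (-1) ^ 0 * schurTwoRow N (2 * n - 0) 0 := by
        congr 1
        · refine sum_congr rfl fun k hk => ?_
          rw [schurTwoRow_two_mul_sub_succ N n k (by rw [mem_range] at hk; omega)]
          ring
        · simp [f, schurTwoRow_zero, hPoly_zero]
    _ = _ := (sum_range_succ' (fun k => (-1) ^ k * schurTwoRow N (2 * n - k) k) n).symm

theorem h2_plethysm_hn_general (N n : ℕ) :
    plethH2 (hPoly N n) =
      ∑ k ∈ Finset.range (n / 2 + 1), schurTwoRow N (2 * n - 2 * k) (2 * k) := by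
  have hsum : hPoly N n ^ 2 + expand 2 (hPoly N n) =
      ∑ k ∈ range (n + 1), (1 + (-1) ^ k) * schurTwoRow N (2 * n - k) k := by
    rw [hPoly_sq_eq_sum_schurTwoRow, expand_two_hPoly_eq_sum_schurTwoRow, ← sum_add_distrib]
    exact sum_congr rfl fun k _ => by ring
  rw [plethH2, ← expand, hsum, sum_range_succ_one_add_neg_one_pow_mul, ← mul_assoc,
    ← map_ofNat C 2, ← C_mul]
  norm_num

theorem h2_plethysm_hn (N n : ℕ) (hn : 2 ≤ n) :
    plethH2 (hPoly N n) =
      ∑ k ∈ Finset.range (n / 2 + 1), schurTwoRow N (2 * n - 2 * k) (2 * k) :=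
  h2_plethysm_hn_general N n
end
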